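/- arXiv:1610.01845 — 2 statements merged into one kernel-verified Lean document; each statement's English description precedes it below -/
import Mathlib

section
/- For all p > 0 and μ ∈ ℝ, the equation −y/p + K₁(y,p,μ)/K(y,p,μ) = 0 has at least one solution y ∈ ℝ, and every solution of this equation is strictly positive. -/
/-- The single-cell partition function `K(y,p,μ)` with cell volume `υ` and ratio `a`. -/
noncomputable def K (υ a y p μ : ℝ) : ℝ :=
  ∑' n : ℕ, (υ ^ n / (Nat.factorial n : ℝ)) *
    Real.exp ((y + μ) * n - (a * p / 2) * (n : ℝ) ^ 2)

/-- The function `E(y,p,μ) = -y²/(2p) + ln K(y,p,μ)`. -/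
noncomputable def E (υ a y p μ : ℝ) : ℝ :=
  -(y ^ 2) / (2 * p) + Real.log (K υ a y p μ)


/-- `K₁(y,p,μ) = Σ_{n≥1} (n·υⁿ/n!)·exp((y+μ)n − (ap/2)n²)` (the `n = 0` term vanishes). -/
noncomputable def K1 (υ a y p μ : ℝ) : ℝ :=
  ∑' n : ℕ, ((n : ℝ) * υ ^ n / (Nat.factorial n : ℝ)) *
    Real.exp ((y + μ) * n - (a * p / 2) * (n : ℝ) ^ 2)

/-!
Writing `w_n(y)` for the summands of `K`, one has `(n+1) w_{n+1}(y) = υ e^{y+μ-ap/2} w_n(y-ap)`, so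
`K₁(y) = υ e^{y+μ-ap/2} K(y-ap)`; in particular `K₁` is continuous and positive. The same identity
bounds the mean `K₁/K` of `n` under the weights `w_n(y)` by `M + υ` whenever `y + μ + ap/2 ≤ apM`:
indices with `n + 1 ≤ M` contribute at most `M`, and beyond `M` the factor `e^{y+μ-ap/2-apn}` is at
most `1`. As `a > 1`, this makes `K₁/K ≤ y/p` for large `y`, while `K₁/K > 0` at `y = 0`, so the
intermediate value theorem gives a root; at any root `y/p = K₁/K > 0`.
-/

open Real Set

noncomputable def KTerm (υ a y p μ : ℝ) (n : ℕ) : ℝ :=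
  (υ ^ n / (Nat.factorial n : ℝ)) * exp ((y + μ) * n - (a * p / 2) * (n : ℝ) ^ 2)

section KTerm

variable {υ a y p μ : ℝ}

lemma K_eq_tsum_KTerm : K υ a y p μ = ∑' n, KTerm υ a y p μ n := rfl

lemma KTerm_zero : KTerm υ a y p μ 0 = 1 := by simp [KTerm]

lemma KTerm_nonneg (hυ : 0 ≤ υ) (n : ℕ) : 0 ≤ KTerm υ a y p μ n := by
  unfold KTerm; positivity

lemma KTerm_le_pow_div_factorial {Y : ℝ} (hυ : 0 ≤ υ) (hap : 0 ≤ a * p) (hyY : y ≤ Y) (n : ℕ) :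
    KTerm υ a y p μ n ≤ (υ * exp (Y + μ)) ^ n / (Nat.factorial n : ℝ) := by
  have hexp : exp ((y + μ) * n - (a * p / 2) * (n : ℝ) ^ 2) ≤ exp (Y + μ) ^ n := by
    rw [← exp_nat_mul, exp_le_exp]
    nlinarith [mul_le_mul_of_nonneg_right hyY n.cast_nonneg, mul_nonneg hap (sq_nonneg (n : ℝ))]
  calc KTerm υ a y p μ n ≤ υ ^ n / (Nat.factorial n : ℝ) * exp (Y + μ) ^ n := by
        unfold KTerm; gcongr
    _ = (υ * exp (Y + μ)) ^ n / (Nat.factorial n : ℝ) := by ring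

lemma summable_KTerm (hυ : 0 ≤ υ) (hap : 0 ≤ a * p) : Summable (KTerm υ a y p μ) :=
  (summable_pow_div_factorial _).of_nonneg_of_le (KTerm_nonneg hυ)
    (KTerm_le_pow_div_factorial hυ hap le_rfl)

lemma KTerm_sub_mul (n : ℕ) :
    KTerm υ a (y - a * p) p μ n = exp (-(a * p * n)) * KTerm υ a y p μ n := by
  unfold KTerm
  rw [show (y - a * p + μ) * n - a * p / 2 * (n : ℝ) ^ 2
      = -(a * p * n) + ((y + μ) * n - a * p / 2 * (n : ℝ) ^ 2) by ring, exp_add]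
  ring

lemma succ_mul_KTerm_succ (n : ℕ) :
    ((n : ℝ) + 1) * KTerm υ a y p μ (n + 1)
      = υ * exp (y + μ - a * p / 2) * KTerm υ a (y - a * p) p μ n := by
  unfold KTerm
  rw [show (y + μ) * ((n + 1 : ℕ) : ℝ) - a * p / 2 * ((n + 1 : ℕ) : ℝ) ^ 2
      = (y + μ - a * p / 2) + ((y - a * p + μ) * n - a * p / 2 * (n : ℝ) ^ 2) by push_cast; ring,
    exp_add, Nat.factorial_succ, pow_succ]
  have : (Nat.factorial n : ℝ) ≠ 0 := by positivity
  push_cast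
  field_simp

end KTerm

section K

variable {υ a p μ : ℝ}

lemma one_le_K (hυ : 0 ≤ υ) (hap : 0 ≤ a * p) (y : ℝ) : 1 ≤ K υ a y p μ := by
  rw [K_eq_tsum_KTerm, ← KTerm_zero (υ := υ) (a := a) (y := y) (p := p) (μ := μ)]
  exact (summable_KTerm hυ hap).le_tsum 0 fun n _ => KTerm_nonneg hυ n

lemma K_pos (hυ : 0 ≤ υ) (hap : 0 ≤ a * p) (y : ℝ) : 0 < K υ a y p μ :=
  one_pos.trans_le (one_le_K hυ hap y)

lemma continuous_K (hυ : 0 ≤ υ) (hap : 0 ≤ a * p) : Continuous fun y => K υ a y p μ := by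
  refine continuous_iff_continuousAt.2 fun y => ContinuousOn.continuousAt ?_
    (Iio_mem_nhds (lt_add_one y))
  show ContinuousOn (fun y => ∑' n, KTerm υ a y p μ n) _
  refine continuousOn_tsum (fun n => Continuous.continuousOn (by unfold KTerm; fun_prop))
    (summable_pow_div_factorial (υ * exp (y + 1 + μ))) fun n x hx => ?_
  rw [norm_of_nonneg (KTerm_nonneg hυ n)]
  exact KTerm_le_pow_div_factorial hυ hap (le_of_lt hx) n

lemma K1_eq_mul_K_sub (hυ : 0 ≤ υ) (hap : 0 ≤ a * p) (y : ℝ) :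
    K1 υ a y p μ = υ * exp (y + μ - a * p / 2) * K υ a (y - a * p) p μ := by
  have hsum : HasSum (fun n => υ * exp (y + μ - a * p / 2) * KTerm υ a (y - a * p) p μ n)
      (υ * exp (y + μ - a * p / 2) * K υ a (y - a * p) p μ) :=
    (summable_KTerm hυ hap).hasSum.mul_left _
  simp only [← succ_mul_KTerm_succ] at hsum
  have := (hasSum_nat_add_iff (f := fun n : ℕ => (n : ℝ) * KTerm υ a y p μ n) 1).1
    (by simpa only [Nat.cast_succ] using hsum)
  rw [Finset.sum_range_one, Nat.cast_zero, zero_mul, add_zero] at this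
  rw [K1, ← this.tsum_eq]
  exact tsum_congr fun n => by unfold KTerm; ring

lemma K1_pos (hυ : 0 < υ) (hap : 0 ≤ a * p) (y : ℝ) : 0 < K1 υ a y p μ := by
  rw [K1_eq_mul_K_sub hυ.le hap]
  have := K_pos (μ := μ) hυ.le hap (y - a * p)
  positivity

lemma continuous_K1 (hυ : 0 ≤ υ) (hap : 0 ≤ a * p) : Continuous fun y => K1 υ a y p μ := by
  simp only [K1_eq_mul_K_sub hυ hap]
  have := continuous_K (μ := μ) hυ hap
  fun_prop

lemma K1_le_mul_K {y M : ℝ} (hυ : 0 ≤ υ) (hap : 0 ≤ a * p) (hM : 0 ≤ M)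
    (hyM : y + μ + a * p / 2 ≤ a * p * M) : K1 υ a y p μ ≤ (M + υ) * K υ a y p μ := by
  set w := KTerm υ a y p μ
  have hw : Summable w := summable_KTerm hυ hap
  have hterm : ∀ n : ℕ,
      υ * exp (y + μ - a * p / 2) * KTerm υ a (y - a * p) p μ n ≤ M * w (n + 1) + υ * w n := by
    intro n
    have hw₀ := KTerm_nonneg (a := a) (y := y) (p := p) (μ := μ) hυ n
    have hw₁ := KTerm_nonneg (a := a) (y := y) (p := p) (μ := μ) hυ (n + 1)
    rcases le_or_gt ((n : ℝ) + 1) M with hn | hn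
    · rw [← succ_mul_KTerm_succ]
      nlinarith [mul_le_mul_of_nonneg_right hn hw₁]
    · have hexp : exp (y + μ - a * p / 2) * exp (-(a * p * n)) ≤ 1 := by
        rw [← exp_add, exp_le_one_iff]
        nlinarith [mul_le_mul_of_nonneg_left hn.le hap]
      rw [KTerm_sub_mul]
      nlinarith [mul_le_mul_of_nonneg_left hexp (mul_nonneg hυ hw₀)]
  have hshift : ∑' n, w (n + 1) ≤ K υ a y p μ := by
    rw [K_eq_tsum_KTerm, hw.tsum_eq_zero_add]
    linarith [KTerm_nonneg (a := a) (y := y) (p := p) (μ := μ) hυ 0]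
  calc K1 υ a y p μ = ∑' n, υ * exp (y + μ - a * p / 2) * KTerm υ a (y - a * p) p μ n := by
        rw [K1_eq_mul_K_sub hυ hap, K_eq_tsum_KTerm, tsum_mul_left]
    _ ≤ ∑' n, (M * w (n + 1) + υ * w n) :=
        Summable.tsum_le_tsum hterm ((summable_KTerm hυ hap).mul_left _)
          (((summable_nat_add_iff 1).2 hw).mul_left M |>.add (hw.mul_left υ))
    _ = M * ∑' n, w (n + 1) + υ * K υ a y p μ := by
        rw [Summable.tsum_add (((summable_nat_add_iff 1).2 hw).mul_left M) (hw.mul_left υ),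
          tsum_mul_left, tsum_mul_left, K_eq_tsum_KTerm]
    _ ≤ (M + υ) * K υ a y p μ := by nlinarith [mul_le_mul_of_nonneg_left hshift hM]

end K

theorem stmt_9 (υ a : ℝ) (hυ : 0 < υ) (ha : 1 < a) (p μ : ℝ) (hp : 0 < p) :
    (∃ y : ℝ, -y / p + K1 υ a y p μ / K υ a y p μ = 0) ∧
    (∀ y : ℝ, -y / p + K1 υ a y p μ / K υ a y p μ = 0 → 0 < y) := by
  have hap : 0 ≤ a * p := by positivity
  have hmean_pos : ∀ y, 0 < K1 υ a y p μ / K υ a y p μ := fun y =>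
    div_pos (K1_pos hυ hap y) (K_pos hυ.le hap y)
  refine ⟨?_, fun y hy => ?_⟩
  · obtain ⟨Y, hYυ, hYa⟩ : ∃ Y, p * υ ≤ Y ∧ μ + a * p * (1 / 2 + υ) ≤ (a - 1) * Y :=
      ((Filter.eventually_ge_atTop (p * υ)).and
        ((Filter.tendsto_id.const_mul_atTop (sub_pos.2 ha)).eventually_ge_atTop
          (μ + a * p * (1 / 2 + υ)))).exists
    have hY : 0 ≤ Y := (mul_pos hp hυ).le.trans hYυ
    have hmean_le : K1 υ a Y p μ / K υ a Y p μ ≤ Y / p := by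
      have hM : a * p * (Y / p - υ) = a * Y - a * p * υ := by field_simp
      have hbound := K1_le_mul_K (μ := μ) (y := Y) (M := Y / p - υ) hυ.le hap
        (by rw [sub_nonneg, le_div_iff₀ hp]; linarith) (by linarith)
      rw [div_le_iff₀ (K_pos hυ.le hap Y)]
      linarith
    have hcont : Continuous fun y => -y / p + K1 υ a y p μ / K υ a y p μ :=
      (continuous_neg.div_const p).add
        ((continuous_K1 hυ.le hap).div (continuous_K hυ.le hap) fun y => (K_pos hυ.le hap y).ne')
    obtain ⟨y, -, hy⟩ := intermediate_value_Icc' hY hcont.continuousOn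
      (show (0 : ℝ) ∈ Icc _ _ from ⟨by rw [neg_div]; linarith, by simpa using (hmean_pos 0).le⟩)
    exact ⟨y, hy⟩
  · have hyp : 0 < y / p := by rw [neg_div] at hy; linarith [hmean_pos y]
    exact (div_pos_iff_of_pos_right hp).1 hyp
end

section
/- For all p > 0, μ ∈ ℝ and y ∈ ℝ, the second partial derivative of E in y exists and is given by ∂²E/∂y²(y,p,μ) = −1/p + (1/(2·K(y,p,μ)²))·Σ_{n₁,n₂ ≥ 0} (υ^{n₁+n₂}/(n₁!·n₂!))·(n₁−n₂)²·exp((y+μ)(n₁+n₂) − (a p/2)(n₁² + n₂²)), the double series being convergent. -/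
open Real Nat

theorem summable_pow_mul_pow_div_factorial (k : ℕ) (r : ℝ) :
    Summable fun n : ℕ => (n : ℝ) ^ k * (r ^ n / n !) := by
  refine .of_norm_bounded ((summable_pow_div_factorial (exp 1 * |r|)).mul_left (k ! : ℝ))
    fun n => ?_
  -- a single term of the exponential series of `n`
  have hpow : (n : ℝ) ^ k ≤ k ! * exp 1 ^ n := by
    rw [← exp_nat_mul, mul_one, mul_comm]
    exact (div_le_iff₀ (by positivity)).1 (Real.pow_div_factorial_le_exp _ n.cast_nonneg k)
  rw [norm_mul, norm_div, norm_pow, norm_pow, Real.norm_natCast, Real.norm_natCast, mul_pow,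
    Real.norm_eq_abs]
  calc (n : ℝ) ^ k * (|r| ^ n / n !) ≤ k ! * exp 1 ^ n * (|r| ^ n / n !) := by gcongr
    _ = k ! * (exp 1 ^ n * |r| ^ n / n !) := by ring

theorem hasSum_sub_sq_mul_mul {ι : Type*} {t g : ι → ℝ} (hg : ∀ i, 0 ≤ g i)
    (h₀ : Summable g) (h₂ : Summable fun i => t i ^ 2 * g i) :
    HasSum (fun q : ι × ι => (t q.1 - t q.2) ^ 2 * (g q.1 * g q.2))
      (2 * ((∑' i, t i ^ 2 * g i) * (∑' i, g i) - (∑' i, t i * g i) ^ 2)) := by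
  have hasSum_mul {f f' : ι → ℝ} (hf : Summable fun i => ‖f i‖) (hf' : Summable fun i => ‖f' i‖) :
      HasSum (fun q : ι × ι => f q.1 * f' q.2) ((∑' i, f i) * ∑' i, f' i) :=
    tsum_mul_tsum_of_summable_norm hf hf' ▸ (summable_mul_of_summable_norm hf hf').hasSum
  have n₀ : Summable fun i => ‖g i‖ := h₀.norm
  have n₂ : Summable fun i => ‖t i ^ 2 * g i‖ := h₂.norm
  have n₁ : Summable fun i => ‖t i * g i‖ := by
    refine .of_nonneg_of_le (fun _ => norm_nonneg _) (fun i => ?_) (h₀.add h₂)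
    rw [norm_mul, Real.norm_of_nonneg (hg i), Real.norm_eq_abs]
    nlinarith [hg i, abs_nonneg (t i), sq_abs (t i), sq_nonneg (|t i| - 1)]
  convert ((hasSum_mul n₂ n₀).add ((hasSum_mul n₁ n₁).mul_left (-2))).add (hasSum_mul n₀ n₂)
    using 1
  · funext q; ring
  · ring

section Cell

variable {υ a p μ : ℝ}

noncomputable def Kterm (υ a p μ : ℝ) (n : ℕ) (x : ℝ) : ℝ :=
  υ ^ n / n ! * exp ((x + μ) * n - a * p / 2 * (n : ℝ) ^ 2)

noncomputable def Kmoment (υ a p μ : ℝ) (k : ℕ) (x : ℝ) : ℝ :=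
  ∑' n : ℕ, (n : ℝ) ^ k * Kterm υ a p μ n x

theorem K_eq_Kmoment_zero (x : ℝ) : K υ a x p μ = Kmoment υ a p μ 0 x := by
  simp only [K, Kmoment, Kterm, pow_zero, one_mul]

theorem Kterm_nonneg (hυ : 0 ≤ υ) (n : ℕ) (x : ℝ) : 0 ≤ Kterm υ a p μ n x := by
  unfold Kterm; positivity

theorem Kterm_mono (hυ : 0 ≤ υ) (n : ℕ) : Monotone (Kterm υ a p μ n) := fun x z hxz => by
  simp only [Kterm]
  gcongr

theorem Kterm_le (hυ : 0 ≤ υ) (hap : 0 ≤ a * p) (n : ℕ) (x : ℝ) :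
    Kterm υ a p μ n x ≤ (υ * exp (x + μ)) ^ n / n ! := by
  rw [Kterm, mul_pow, ← exp_nat_mul, mul_div_right_comm (υ ^ n)]
  gcongr
  nlinarith [mul_nonneg hap (sq_nonneg (n : ℝ))]

theorem summable_pow_mul_Kterm (hυ : 0 ≤ υ) (hap : 0 ≤ a * p) (k : ℕ) (x : ℝ) :
    Summable fun n : ℕ => (n : ℝ) ^ k * Kterm υ a p μ n x :=
  .of_nonneg_of_le (fun n => mul_nonneg (by positivity) (Kterm_nonneg hυ n x))
    (fun n => mul_le_mul_of_nonneg_left (Kterm_le hυ hap n x) (by positivity))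
    (summable_pow_mul_pow_div_factorial k _)

theorem hasDerivAt_Kterm (n : ℕ) (x : ℝ) :
    HasDerivAt (Kterm υ a p μ n) (n * Kterm υ a p μ n x) x := by
  have hlin : HasDerivAt (fun z : ℝ => (z + μ) * n - a * p / 2 * (n : ℝ) ^ 2) (n : ℝ) x := by
    simpa using (((hasDerivAt_id x).add_const μ).mul_const (n : ℝ)).sub_const
      (a * p / 2 * (n : ℝ) ^ 2)
  exact (hlin.exp.const_mul _).congr_deriv (by rw [Kterm]; ring)

theorem hasDerivAt_Kmoment (hυ : 0 ≤ υ) (hap : 0 ≤ a * p) (k : ℕ) (x : ℝ) :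
    HasDerivAt (Kmoment υ a p μ k) (Kmoment υ a p μ (k + 1) x) x := by
  unfold Kmoment
  -- on `ball x 1` the terms are dominated by their values at `x + 1`
  refine hasDerivAt_tsum_of_isPreconnected
    (g := fun (n : ℕ) (z : ℝ) => (n : ℝ) ^ k * Kterm υ a p μ n z)
    (g' := fun (n : ℕ) (z : ℝ) => (n : ℝ) ^ (k + 1) * Kterm υ a p μ n z)
    (summable_pow_mul_Kterm (μ := μ) hυ hap (k + 1) (x + 1))
    Metric.isOpen_ball (convex_ball x 1).isPreconnected (fun n z _ => ?_) (fun n z hz => ?_)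
    (Metric.mem_ball_self one_pos) (summable_pow_mul_Kterm hυ hap k x)
    (Metric.mem_ball_self one_pos)
  · exact ((hasDerivAt_Kterm n z).const_mul _).congr_deriv (by ring)
  · rw [Real.norm_of_nonneg (mul_nonneg (by positivity) (Kterm_nonneg hυ n z))]
    have hzx : z ≤ x + 1 := by
      linarith [(abs_lt.1 (Real.dist_eq z x ▸ Metric.mem_ball.1 hz)).2]
    exact mul_le_mul_of_nonneg_left (Kterm_mono hυ n hzx) (by positivity)

theorem Kmoment_zero_pos (hυ : 0 ≤ υ) (hap : 0 ≤ a * p) (x : ℝ) : 0 < Kmoment υ a p μ 0 x :=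
  (summable_pow_mul_Kterm hυ hap 0 x).tsum_pos
    (fun n => mul_nonneg (by positivity) (Kterm_nonneg hυ n x)) 0 (by simp [Kterm])

theorem hasDerivAt_E (hυ : 0 ≤ υ) (hap : 0 ≤ a * p) (x : ℝ) :
    HasDerivAt (fun z => E υ a z p μ) (-x / p + Kmoment υ a p μ 1 x / Kmoment υ a p μ 0 x) x := by
  simp_rw [E, K_eq_Kmoment_zero]
  refine (((hasDerivAt_pow 2 x).neg.div_const (2 * p)).add
    ((hasDerivAt_Kmoment hυ hap 0 x).log (Kmoment_zero_pos hυ hap x).ne')).congr_deriv ?_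
  push_cast
  ring

theorem hasDerivAt_deriv_E (hυ : 0 ≤ υ) (hap : 0 ≤ a * p) (x : ℝ) :
    HasDerivAt (deriv fun z => E υ a z p μ)
      (-1 / p + (Kmoment υ a p μ 2 x * Kmoment υ a p μ 0 x - Kmoment υ a p μ 1 x ^ 2) /
        Kmoment υ a p μ 0 x ^ 2) x := by
  rw [show (deriv fun z => E υ a z p μ) = _ from funext fun z => (hasDerivAt_E hυ hap z).deriv]
  refine ((hasDerivAt_id x).neg.div_const p).add ((hasDerivAt_Kmoment hυ hap 1 x).div
    (hasDerivAt_Kmoment hυ hap 0 x) (Kmoment_zero_pos hυ hap x).ne') |>.congr_deriv ?_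
  simp only [sq]

theorem hasSum_sub_sq_mul_Kterm_mul_Kterm (hυ : 0 ≤ υ) (hap : 0 ≤ a * p) (x : ℝ) :
    HasSum (fun q : ℕ × ℕ => ((q.1 : ℝ) - q.2) ^ 2 * (Kterm υ a p μ q.1 x * Kterm υ a p μ q.2 x))
      (2 * (Kmoment υ a p μ 2 x * Kmoment υ a p μ 0 x - Kmoment υ a p μ 1 x ^ 2)) := by
  simpa only [Kmoment, pow_zero, one_mul, pow_one] using
    hasSum_sub_sq_mul_mul (t := Nat.cast) (g := (Kterm υ a p μ · x)) (Kterm_nonneg hυ · x)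
      (by simpa using summable_pow_mul_Kterm hυ hap 0 x) (summable_pow_mul_Kterm hυ hap 2 x)

theorem Kterm_mul_Kterm (m n : ℕ) (x : ℝ) :
    Kterm υ a p μ m x * Kterm υ a p μ n x =
      υ ^ (m + n) / (m ! * n !) * exp ((x + μ) * (m + n) - a * p / 2 * ((m : ℝ) ^ 2 + n ^ 2)) := by
  rw [Kterm, Kterm, mul_mul_mul_comm, ← exp_add, pow_add]
  ring_nf

end Cell

theorem stmt_11 (υ a : ℝ) (hυ : 0 < υ) (ha : 1 < a) (p μ y : ℝ) (hp : 0 < p) :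
    Summable (fun q : ℕ × ℕ =>
      (υ ^ (q.1 + q.2) / ((Nat.factorial q.1 : ℝ) * (Nat.factorial q.2 : ℝ))) *
        ((q.1 : ℝ) - (q.2 : ℝ)) ^ 2 *
        Real.exp ((y + μ) * ((q.1 : ℝ) + (q.2 : ℝ)) -
          (a * p / 2) * ((q.1 : ℝ) ^ 2 + (q.2 : ℝ) ^ 2))) ∧
    HasDerivAt (fun y' => deriv (fun y'' => E υ a y'' p μ) y')
      (-1 / p + (1 / (2 * (K υ a y p μ) ^ 2)) *
        ∑' q : ℕ × ℕ,
          (υ ^ (q.1 + q.2) / ((Nat.factorial q.1 : ℝ) * (Nat.factorial q.2 : ℝ))) *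
            ((q.1 : ℝ) - (q.2 : ℝ)) ^ 2 *
            Real.exp ((y + μ) * ((q.1 : ℝ) + (q.2 : ℝ)) -
              (a * p / 2) * ((q.1 : ℝ) ^ 2 + (q.2 : ℝ) ^ 2))) y := by
  have hap : 0 ≤ a * p := mul_nonneg (zero_le_one.trans ha.le) hp.le
  have hsum := hasSum_sub_sq_mul_Kterm_mul_Kterm (μ := μ) hυ.le hap y
  simp only [Kterm_mul_Kterm, ← mul_assoc, mul_comm _ (υ ^ _ / _)] at hsum
  refine ⟨hsum.summable, ?_⟩
  rw [hsum.tsum_eq, K_eq_Kmoment_zero]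
  refine (hasDerivAt_deriv_E hυ.le hap y).congr_deriv ?_
  have hK := (Kmoment_zero_pos (μ := μ) hυ.le hap y).ne'
  field_simp
end
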